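/- Let d ≥ 2 and let an ontological model for projective measurements on ℂ^d reproduce quantum measurement statistics. Then for all unit vectors ψ, φ ∈ ℂ^d, the classical overlap does not exceed the quantum overlap: ω_C(ψ, φ) ≤ ω_Q(ψ, φ), i.e., ∫ min(μ_ψ, μ_φ) dν ≤ 1 − √(1 − |⟨ψ, φ⟩|²). -/

import Mathlib

noncomputable section

/-- An ontological model for projective measurements on `ℂ^d`: a σ-finite measure space
of ontic states, an epistemic state (normalized probability density) for each unit vector,
and response functions for each orthonormal (projection) basis. -/
structure OntModel (d : ℕ) where
  /-- the ontic state space -/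
  Lam : Type
  [ms : MeasurableSpace Lam]
  /-- the measure on the ontic state space -/
  ν : MeasureTheory.Measure Lam
  sf : MeasureTheory.SigmaFinite ν
  /-- the epistemic states -/
  μ : EuclideanSpace ℂ (Fin d) → Lam → ℝ
  μ_meas : ∀ ψ, Measurable (μ ψ)
  μ_nonneg : ∀ ψ l, 0 ≤ μ ψ l
  μ_norm : ∀ ψ : EuclideanSpace ℂ (Fin d), ‖ψ‖ = 1 → ∫ l, μ ψ l ∂ν = 1
  /-- the response functions -/
  ξ : (Fin d → EuclideanSpace ℂ (Fin d)) → Fin d → Lam → ℝ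
  ξ_meas : ∀ M i, Measurable (ξ M i)
  ξ_nonneg : ∀ M i l, 0 ≤ ξ M i l
  ξ_sum : ∀ M, Orthonormal ℂ M → ∀ l, ∑ i, ξ M i l = 1

/-- The model reproduces quantum measurement statistics: for every unit vector `ψ` and
every orthonormal basis `M`, the probability of outcome `i` is `|⟨m_i, ψ⟩|²`. -/
def Reproduces {d : ℕ} (m : OntModel d) : Prop :=
  ∀ ψ : EuclideanSpace ℂ (Fin d), ‖ψ‖ = 1 →
    ∀ M : Fin d → EuclideanSpace ℂ (Fin d), Orthonormal ℂ M →
      ∀ i : Fin d, ∫ l, m.ξ M i l * m.μ ψ l ∂m.ν = ‖(inner ℂ (M i) ψ : ℂ)‖ ^ 2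

/-- The classical overlap `ω_C(ψ, φ) = ∫ min(μ_ψ, μ_φ) dν`. -/
def omegaC {d : ℕ} (m : OntModel d) (ψ φ : EuclideanSpace ℂ (Fin d)) : ℝ :=
  ∫ l, min (m.μ ψ l) (m.μ φ l) ∂m.ν

/-- The quantum overlap `ω_Q(ψ, φ) = 1 − √(1 − |⟨ψ, φ⟩|²)`. -/
def omegaQ {d : ℕ} (ψ φ : EuclideanSpace ℂ (Fin d)) : ℝ :=
  1 - Real.sqrt (1 - ‖(inner ℂ ψ φ : ℂ)‖ ^ 2)

/-- The ratio of classical-to-quantum overlaps `κ(ψ, φ) = ω_C(ψ, φ)/ω_Q(ψ, φ)`. -/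
def kappa {d : ℕ} (m : OntModel d) (ψ φ : EuclideanSpace ℂ (Fin d)) : ℝ :=
  omegaC m ψ φ / omegaQ ψ φ

/-- An orthogonal projection: idempotent and symmetric. -/
def IsOrthogonalProjection {d : ℕ}
    (P : EuclideanSpace ℂ (Fin d) →ₗ[ℂ] EuclideanSpace ℂ (Fin d)) : Prop :=
  P ∘ₗ P = P ∧ LinearMap.IsSymmetric P

/-- `(ψ0, ψ1, ψ2)` are PP-incompatible: there are orthogonal projections summing to the
identity with `P_i ψ_i = 0` for each `i`. -/
def PPIncompatible {d : ℕ} (ψ0 ψ1 ψ2 : EuclideanSpace ℂ (Fin d)) : Prop :=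
  ∃ P0 P1 P2 : EuclideanSpace ℂ (Fin d) →ₗ[ℂ] EuclideanSpace ℂ (Fin d),
    IsOrthogonalProjection P0 ∧ IsOrthogonalProjection P1 ∧ IsOrthogonalProjection P2 ∧
    P0 + P1 + P2 = LinearMap.id ∧ P0 ψ0 = 0 ∧ P1 ψ1 = 0 ∧ P2 ψ2 = 0

/-!
Measuring an orthonormal basis `M` and coarse-graining to the two outcomes "`i`" and "not `i`"
gives pointwise `min (μ_ψ, μ_φ) ≤ (1 - ξ_i) μ_ψ + ξ_i μ_φ`, hence
`ω_C(ψ, φ) ≤ 1 - (|⟨m_i, ψ⟩|² - |⟨m_i, φ⟩|²)`. The largest value of `|⟨u, ψ⟩|² - |⟨u, φ⟩|²` over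
unit vectors `u` is the top eigenvalue `s = √(1 - |⟨ψ, φ⟩|²)` of `|ψ⟩⟨ψ| - |φ⟩⟨φ|`, with
eigenvector `(1 + s) ψ - ⟨φ, ψ⟩ φ` (which may vanish when `s = 0`; then `ψ` will do). Extending
this vector, normalized, to an orthonormal basis gives `ω_C ≤ 1 - s = ω_Q`.
-/

open MeasureTheory
open scoped InnerProductSpace ComplexConjugate

namespace OntModel

variable {d : ℕ} (m : OntModel d)

theorem integrable_μ {ψ : EuclideanSpace ℂ (Fin d)} (hψ : ‖ψ‖ = 1) : Integrable (m.μ ψ) m.ν :=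
  Integrable.of_integral_ne_zero (by simp [m.μ_norm ψ hψ])

theorem ξ_le_one {M : Fin d → EuclideanSpace ℂ (Fin d)} (hM : Orthonormal ℂ M) (i : Fin d)
    (l : m.Lam) : m.ξ M i l ≤ 1 :=
  m.ξ_sum M hM l ▸ Finset.single_le_sum (fun j _ => m.ξ_nonneg M j l) (Finset.mem_univ i)

theorem integrable_ξ_mul_μ {M : Fin d → EuclideanSpace ℂ (Fin d)} (hM : Orthonormal ℂ M)
    (i : Fin d) {ψ : EuclideanSpace ℂ (Fin d)} (hψ : ‖ψ‖ = 1) :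
    Integrable (fun l => m.ξ M i l * m.μ ψ l) m.ν :=
  (m.integrable_μ hψ).bdd_mul (m.ξ_meas M i).aestronglyMeasurable
    (ae_of_all _ fun l => by
      rw [Real.norm_eq_abs, abs_of_nonneg (m.ξ_nonneg M i l)]; exact m.ξ_le_one hM i l)

theorem omegaC_le (hm : Reproduces m) {ψ φ : EuclideanSpace ℂ (Fin d)} (hψ : ‖ψ‖ = 1)
    (hφ : ‖φ‖ = 1) {M : Fin d → EuclideanSpace ℂ (Fin d)} (hM : Orthonormal ℂ M) (i : Fin d) :
    omegaC m ψ φ ≤ 1 - (‖⟪M i, ψ⟫_ℂ‖ ^ 2 - ‖⟪M i, φ⟫_ℂ‖ ^ 2) := by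
  have hψi := m.integrable_ξ_mul_μ hM i hψ
  have hφi := m.integrable_ξ_mul_μ hM i hφ
  have hψc : Integrable (fun l => m.μ ψ l - m.ξ M i l * m.μ ψ l) m.ν :=
    (m.integrable_μ hψ).sub hψi
  have hmin : ∀ l, min (m.μ ψ l) (m.μ φ l) ≤
      m.μ ψ l - m.ξ M i l * m.μ ψ l + m.ξ M i l * m.μ φ l := fun l => by
    have hξ₀ := m.ξ_nonneg M i l
    have hξ₁ := m.ξ_le_one hM i l
    nlinarith [min_le_left (m.μ ψ l) (m.μ φ l), min_le_right (m.μ ψ l) (m.μ φ l)]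
  calc omegaC m ψ φ
      ≤ ∫ l, m.μ ψ l - m.ξ M i l * m.μ ψ l + m.ξ M i l * m.μ φ l ∂m.ν :=
        integral_mono_of_nonneg
          (ae_of_all _ fun l => le_min (m.μ_nonneg ψ l) (m.μ_nonneg φ l))
          (hψc.add hφi) (ae_of_all _ hmin)
    _ = 1 - (‖⟪M i, ψ⟫_ℂ‖ ^ 2 - ‖⟪M i, φ⟫_ℂ‖ ^ 2) := by
        rw [integral_add hψc hφi, integral_sub (m.integrable_μ hψ) hψi,
          m.μ_norm ψ hψ, hm ψ hψ M hM i, hm φ hφ M hM i]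
        ring

end OntModel

section Overlap

variable {𝕜 E : Type*} [RCLike 𝕜] [NormedAddCommGroup E] [InnerProductSpace 𝕜 E]

theorem norm_inner_sq_sub_norm_inner_sq_eq {ψ φ : E} (hψ : ‖ψ‖ = 1) (hφ : ‖φ‖ = 1) {s : ℝ}
    (hs : s ^ 2 = 1 - ‖⟪ψ, φ⟫_𝕜‖ ^ 2) (v : E) (hv : v = ((1 + s : ℝ) : 𝕜) • ψ - ⟪φ, ψ⟫_𝕜 • φ) :
    ‖⟪v, ψ⟫_𝕜‖ ^ 2 - ‖⟪v, φ⟫_𝕜‖ ^ 2 = s * ‖v‖ ^ 2 ∧ ‖v‖ ^ 2 = 2 * s ^ 2 * (1 + s) := by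
  rw [← inner_conj_symm] at hv
  set c := ⟪ψ, φ⟫_𝕜
  have hψψ : ⟪ψ, ψ⟫_𝕜 = 1 := by simp [inner_self_eq_norm_sq_to_K, hψ]
  have hφφ : ⟪φ, φ⟫_𝕜 = 1 := by simp [inner_self_eq_norm_sq_to_K, hφ]
  have hc : c * conj c = ((1 - s ^ 2 : ℝ) : 𝕜) := by rw [RCLike.mul_conj, hs]; simp
  have hvψ : ⟪v, ψ⟫_𝕜 = ((s + s ^ 2 : ℝ) : 𝕜) := by
    rw [hv, inner_sub_left, inner_smul_left, inner_smul_left, hψψ, RCLike.conj_conj,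
      RCLike.conj_ofReal, ← inner_conj_symm, hc]
    push_cast; ring
  have hvφ : ⟪v, φ⟫_𝕜 = (s : 𝕜) * c := by
    rw [hv, inner_sub_left, inner_smul_left, inner_smul_left, hφφ, RCLike.conj_conj,
      RCLike.conj_ofReal]
    push_cast; ring
  have hvv : ‖v‖ ^ 2 = 2 * s ^ 2 * (1 + s) := by
    have : ⟪v, v⟫_𝕜 = ((2 * s ^ 2 * (1 + s) : ℝ) : 𝕜) := by
      nth_rw 1 [hv]
      rw [inner_sub_left, inner_smul_left, inner_smul_left, RCLike.conj_conj, RCLike.conj_ofReal,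
        ← inner_conj_symm, hvψ, ← inner_conj_symm φ v, hvφ, map_mul, RCLike.conj_ofReal,
        ← mul_assoc, mul_comm c, mul_assoc, hc]
      simp only [RCLike.conj_ofReal]
      push_cast; ring
    rw [← RCLike.ofReal_inj (K := 𝕜), RCLike.ofReal_pow, ← inner_self_eq_norm_sq_to_K, this]
  refine ⟨?_, hvv⟩
  rw [hvψ, hvφ, norm_mul, RCLike.norm_ofReal, RCLike.norm_ofReal, mul_pow, sq_abs, sq_abs, hvv]
  linear_combination (-s ^ 2) * hs

theorem exists_norm_eq_one_norm_inner_sq_sub_eq_sqrt {ψ φ : E} (hψ : ‖ψ‖ = 1) (hφ : ‖φ‖ = 1) :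
    ∃ u : E, ‖u‖ = 1 ∧ ‖⟪u, ψ⟫_𝕜‖ ^ 2 - ‖⟪u, φ⟫_𝕜‖ ^ 2 = √(1 - ‖⟪ψ, φ⟫_𝕜‖ ^ 2) := by
  have hc : ‖⟪ψ, φ⟫_𝕜‖ ≤ 1 := by simpa [hψ, hφ] using norm_inner_le_norm (𝕜 := 𝕜) ψ φ
  set s := √(1 - ‖⟪ψ, φ⟫_𝕜‖ ^ 2)
  have hs : s ^ 2 = 1 - ‖⟪ψ, φ⟫_𝕜‖ ^ 2 := Real.sq_sqrt (by nlinarith [norm_nonneg ⟪ψ, φ⟫_𝕜])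
  rcases (Real.sqrt_nonneg _ : 0 ≤ s).eq_or_lt with hs0 | hs_pos
  · refine ⟨ψ, hψ, ?_⟩
    rw [inner_self_eq_norm_sq_to_K, hψ]
    simp only [map_one, one_pow, norm_one]
    nlinarith
  · obtain ⟨hdiff, hvv⟩ := norm_inner_sq_sub_norm_inner_sq_eq hψ hφ hs _ rfl
    set v : E := ((1 + s : ℝ) : 𝕜) • ψ - ⟪φ, ψ⟫_𝕜 • φ
    have hv : v ≠ 0 := fun h => by
      rw [h, norm_zero] at hvv
      nlinarith [mul_pos (mul_pos hs_pos hs_pos) (by linarith : 0 < 1 + s)]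
    refine ⟨(‖v‖ : 𝕜)⁻¹ • v, norm_smul_inv_norm hv, ?_⟩
    rw [inner_smul_left, inner_smul_left, norm_mul, norm_mul, RCLike.norm_conj, norm_inv,
      RCLike.norm_ofReal, abs_norm, mul_pow, mul_pow, ← mul_sub, hdiff]
    field_simp

theorem exists_orthonormal_fin_apply_eq [FiniteDimensional 𝕜 E] {d : ℕ}
    (hd : Module.finrank 𝕜 E = d) {u : E} (hu : ‖u‖ = 1) :
    ∃ (M : Fin d → E) (i : Fin d), Orthonormal 𝕜 M ∧ M i = u := by
  have hu0 : u ≠ 0 := norm_ne_zero_iff.mp (by simp [hu])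
  let i : Fin d := ⟨0, hd ▸ Module.finrank_pos_iff_exists_ne_zero.mpr ⟨u, hu0⟩⟩
  obtain ⟨b, hb⟩ := Orthonormal.exists_orthonormalBasis_extension_of_card_eq (𝕜 := 𝕜)
    (v := fun _ => u) (s := {i}) (by simpa using hd)
    (orthonormal_subsingleton_iff.mpr fun _ => hu)
  exact ⟨b, i, b.orthonormal, hb i rfl⟩

end Overlap

theorem omegaC_le_omegaQ_general (d : ℕ)
    (m : OntModel d) (hm : Reproduces m)
    (ψ φ : EuclideanSpace ℂ (Fin d)) (hψ : ‖ψ‖ = 1) (hφ : ‖φ‖ = 1) :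
    omegaC m ψ φ ≤ omegaQ ψ φ := by
  obtain ⟨u, hu, hgap⟩ := exists_norm_eq_one_norm_inner_sq_sub_eq_sqrt (𝕜 := ℂ) hψ hφ
  obtain ⟨M, i, hM, rfl⟩ := exists_orthonormal_fin_apply_eq finrank_euclideanSpace_fin hu
  calc omegaC m ψ φ ≤ 1 - (‖⟪M i, ψ⟫_ℂ‖ ^ 2 - ‖⟪M i, φ⟫_ℂ‖ ^ 2) := m.omegaC_le hm hψ hφ hM i
    _ = omegaQ ψ φ := by rw [hgap, omegaQ]

/-- In any ontological model reproducing quantum measurement statistics on `ℂ^d` (`d ≥ 2`),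
the classical overlap of any two unit vectors does not exceed their quantum overlap. -/
theorem omegaC_le_omegaQ (d : ℕ) (hd : 2 ≤ d)
    (m : OntModel d) (hm : Reproduces m)
    (ψ φ : EuclideanSpace ℂ (Fin d)) (hψ : ‖ψ‖ = 1) (hφ : ‖φ‖ = 1) :
    omegaC m ψ φ ≤ omegaQ ψ φ :=
  omegaC_le_omegaQ_general d m hm ψ φ hψ hφ
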